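/- arXiv:math/0607312 — 4 statements merged into one kernel-verified Lean document; each statement's English description precedes it below -/
import Mathlib

section
/- Assume a, b, d : [0,R] → ℝ are continuous and non-negative, c : Ω̄ → ℝ is continuous and non-negative, and a(r) > d(r) for every r ∈ [0,R]. Set α₁ = min_{r ∈ [0,R]} (a(r) − d(r)) and α₂ = max_{r ∈ [0,R]} (a(r) + b(r)) + max_{x ∈ Ω̄} c(x). Then α₁ > 0 and the matrix (a_{j,k}) is uniformly elliptic: for every x ∈ Ω with x ≠ 0 and every ξ ∈ ℝ³, α₁|ξ|² ≤ Σ_{j,k=1}^{3} a_{j,k}(x) ξ_j ξ_k ≤ α₂|ξ|². -/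
open Real

section aux
open RealInnerProductSpace

lemma norm_sq_eq3 (x : EuclideanSpace ℝ (Fin 3)) : ‖x‖ ^ 2 = ∑ i, x i ^ 2 := by
  rw [EuclideanSpace.norm_eq, Real.sq_sqrt (by positivity)]
  simp [sq_abs]

lemma cs3 (x ξ : EuclideanSpace ℝ (Fin 3)) :
    (∑ i, x i * ξ i) ^ 2 ≤ ‖x‖ ^ 2 * ‖ξ‖ ^ 2 := by
  have h : (∑ i, x i * ξ i) = ⟪x, ξ⟫ := by
    simp [PiLp.inner_apply, RCLike.inner_apply, mul_comm]
  rw [h]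
  calc ⟪x, ξ⟫ ^ 2 = |⟪x, ξ⟫| ^ 2 := (sq_abs _).symm
    _ ≤ (‖x‖ * ‖ξ‖) ^ 2 := by
        apply pow_le_pow_left₀ (abs_nonneg _) (abs_real_inner_le_norm x ξ)
    _ = ‖x‖ ^ 2 * ‖ξ‖ ^ 2 := by ring

end aux

/-- The matrix coefficients `a_{j,k}(x)` from the paper, for `x ≠ 0`.
For the diagonal entries we use that e.g. `x₂² + x₃² = |x|² - x₁²`. -/
noncomputable def aCoef (a b d : ℝ → ℝ) (c : EuclideanSpace ℝ (Fin 3) → ℝ)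
    (x : EuclideanSpace ℝ (Fin 3)) (j k : Fin 3) : ℝ :=
  if j = k then
    a ‖x‖ + (‖x‖ ^ 2 - x j ^ 2) * (c x + b ‖x‖) / ‖x‖ ^ 2 - x j ^ 2 * d ‖x‖ / ‖x‖ ^ 2
  else
    -(x j * x k * (b ‖x‖ + c x + d ‖x‖)) / ‖x‖ ^ 2

set_option maxHeartbeats 1000000 in
/-- uniform ellipticity.  With non-negative continuous data and
`a > d` on `[0,R]`, setting `α₁ = min_{[0,R]} (a - d)` and
`α₂ = max_{[0,R]} (a + b) + max_{Ω̄} c`, one has `α₁ > 0` and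
`α₁|ξ|² ≤ Σ a_{j,k}(x) ξ_j ξ_k ≤ α₂|ξ|²` for all `x ∈ Ω \ {0}` and `ξ ∈ ℝ³`. -/
theorem stmt1 (R : ℝ) (hR : 0 < R)
    (a b d : ℝ → ℝ) (c : EuclideanSpace ℝ (Fin 3) → ℝ)
    (ha : ContinuousOn a (Set.Icc 0 R)) (hb : ContinuousOn b (Set.Icc 0 R))
    (hd : ContinuousOn d (Set.Icc 0 R))
    (hc : ContinuousOn c (Metric.closedBall 0 R))
    (ha0 : ∀ r ∈ Set.Icc (0:ℝ) R, 0 ≤ a r)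
    (hb0 : ∀ r ∈ Set.Icc (0:ℝ) R, 0 ≤ b r)
    (hd0 : ∀ r ∈ Set.Icc (0:ℝ) R, 0 ≤ d r)
    (hc0 : ∀ y ∈ Metric.closedBall (0 : EuclideanSpace ℝ (Fin 3)) R, 0 ≤ c y)
    (had : ∀ r ∈ Set.Icc (0:ℝ) R, d r < a r) :
    0 < sInf ((fun r => a r - d r) '' Set.Icc 0 R)
    ∧ ∀ x : EuclideanSpace ℝ (Fin 3), ‖x‖ < R → x ≠ 0 →
        ∀ ξ : EuclideanSpace ℝ (Fin 3),
          sInf ((fun r => a r - d r) '' Set.Icc 0 R) * ‖ξ‖ ^ 2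
              ≤ (∑ j, ∑ k, aCoef a b d c x j k * ξ j * ξ k)
          ∧ (∑ j, ∑ k, aCoef a b d c x j k * ξ j * ξ k)
              ≤ (sSup ((fun r => a r + b r) '' Set.Icc 0 R)
                  + sSup (c '' Metric.closedBall 0 R)) * ‖ξ‖ ^ 2 := by
  have hIcc : IsCompact (Set.Icc (0:ℝ) R) := isCompact_Icc
  have hne : (Set.Icc (0:ℝ) R).Nonempty := Set.nonempty_Icc.2 hR.le
  have hcompad : IsCompact ((fun r => a r - d r) '' Set.Icc 0 R) :=
    hIcc.image_of_continuousOn (ha.sub hd)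
  have hcompab : IsCompact ((fun r => a r + b r) '' Set.Icc 0 R) :=
    hIcc.image_of_continuousOn (ha.add hb)
  have hball : IsCompact (Metric.closedBall (0 : EuclideanSpace ℝ (Fin 3)) R) :=
    isCompact_closedBall _ _
  have hcompc : IsCompact (c '' Metric.closedBall 0 R) := hball.image_of_continuousOn hc
  have hinfmem : sInf ((fun r => a r - d r) '' Set.Icc 0 R) ∈
      (fun r => a r - d r) '' Set.Icc 0 R :=
    hcompad.sInf_mem (hne.image _)
  have hα₁pos : 0 < sInf ((fun r => a r - d r) '' Set.Icc 0 R) := by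
    obtain ⟨r, hr, heq⟩ := hinfmem
    rw [← heq]
    exact sub_pos.2 (had r hr)
  refine ⟨hα₁pos, fun x hxR hx0 ξ => ?_⟩
  have hrmem : ‖x‖ ∈ Set.Icc (0:ℝ) R := ⟨norm_nonneg x, hxR.le⟩
  have hxmem : x ∈ Metric.closedBall (0 : EuclideanSpace ℝ (Fin 3)) R := by
    simpa [Metric.mem_closedBall] using hxR.le
  have hr0 : ‖x‖ ≠ 0 := norm_ne_zero_iff.2 hx0
  have hr2 : (0:ℝ) < ‖x‖ ^ 2 := by positivity
  set N := ‖ξ‖ ^ 2 with hN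
  set s := ∑ i, x i * ξ i with hs
  set t := s ^ 2 / ‖x‖ ^ 2 with ht
  have hNnn : 0 ≤ N := sq_nonneg _
  have ht0 : 0 ≤ t := by positivity
  have htN : t ≤ N := by
    rw [ht, div_le_iff₀ hr2]
    calc s ^ 2 ≤ ‖x‖ ^ 2 * ‖ξ‖ ^ 2 := cs3 x ξ
      _ = N * ‖x‖ ^ 2 := by ring
  -- key identity
  have hQ : (∑ j, ∑ k, aCoef a b d c x j k * ξ j * ξ k)
      = a ‖x‖ * N + (c x + b ‖x‖) * (N - t) - d ‖x‖ * t := by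
    have hNx : ‖x‖ ^ 2 = x 0 ^ 2 + x 1 ^ 2 + x 2 ^ 2 := by
      rw [norm_sq_eq3]; simp [Fin.sum_univ_three]
    have hNξ : N = ξ 0 ^ 2 + ξ 1 ^ 2 + ξ 2 ^ 2 := by
      rw [hN, norm_sq_eq3]; simp [Fin.sum_univ_three]
    have hss : s = x 0 * ξ 0 + x 1 * ξ 1 + x 2 * ξ 2 := by
      rw [hs]; simp [Fin.sum_univ_three]
    have hsum_ne : x 0 ^ 2 + x 1 ^ 2 + x 2 ^ 2 ≠ 0 := by rw [← hNx]; positivity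
    rw [ht, hss, hNξ]
    simp only [aCoef, Fin.sum_univ_three]
    norm_num [Fin.ext_iff]
    rw [hNx]
    field_simp
    ring
  rw [hQ]
  have haR := ha0 _ hrmem
  have hbR := hb0 _ hrmem
  have hdR := hd0 _ hrmem
  have hcx := hc0 _ hxmem
  have hcb : 0 ≤ c x + b ‖x‖ := add_nonneg hcx hbR
  constructor
  · have hle : sInf ((fun r => a r - d r) '' Set.Icc 0 R) ≤ a ‖x‖ - d ‖x‖ :=
      csInf_le hcompad.bddBelow ⟨‖x‖, hrmem, rfl⟩
    nlinarith [mul_nonneg hcb (sub_nonneg.2 htN), mul_le_mul_of_nonneg_left htN hdR,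
      mul_le_mul_of_nonneg_right hle hNnn]
  · have hle1 : a ‖x‖ + b ‖x‖ ≤ sSup ((fun r => a r + b r) '' Set.Icc 0 R) :=
      le_csSup hcompab.bddAbove ⟨‖x‖, hrmem, rfl⟩
    have hle2 : c x ≤ sSup (c '' Metric.closedBall 0 R) :=
      le_csSup hcompc.bddAbove ⟨x, hxmem, rfl⟩
    nlinarith [mul_nonneg (add_nonneg hcb hdR) ht0,
      mul_le_mul_of_nonneg_right (add_le_add hle1 hle2) hNnn]
end

section
/- Assume a, b, d ∈ C²([0,R]), c ∈ C²(Ω̄), b(0) + c(0) = 0 and d(0) = 0. Extend the matrix coefficients to x = 0 by setting a_{j,j}(0) = a(0) for j = 1,2,3 and a_{j,k}(0) = 0 for j ≠ k. Then each coefficient a_{j,k} is Lipschitz-continuous on Ω̄: there exists L > 0 such that |a_{j,k}(x) − a_{j,k}(y)| ≤ L|x − y| for all x, y ∈ Ω̄ and all 1 ≤ j,k ≤ 3. -/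
/-!
Off the origin, `a_{jk}(x) = δ_{jk} (a + b + c)(x) - x_j x_k f(x) / |x|²` with
`f(x) = b(|x|) + c(x) + d(|x|)`; since `b(0) + c(0) = 0` the same formula gives the extension at
`0`, and `f(0) = 0`. The `C¹` data are Lipschitz on the compact convex sets `[0, R]` and `Ω̄`,
so only the singular term needs care: `x_j x_k / |x|²` is bounded by `1` and, for `|y| ≤ |x|`,
varies by at most `4|x - y| / |x|`, a loss compensated by `|f(y)| ≤ K |y| ≤ K |x|`.
-/

open Real

noncomputable def aCoefExt (a b d : ℝ → ℝ) (c : EuclideanSpace ℝ (Fin 3) → ℝ)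
    (x : EuclideanSpace ℝ (Fin 3)) (j k : Fin 3) : ℝ :=
  haveI := Classical.propDecidable (x = 0)
  if x = 0 then (if j = k then a 0 else 0) else aCoef a b d c x j k

open Metric Set
open scoped NNReal

theorem ContDiffOn.exists_lipschitzOnWith_of_isCompact {E F : Type*} [NormedAddCommGroup E]
    [NormedSpace ℝ E] [NormedAddCommGroup F] [NormedSpace ℝ F] {f : E → F} {s : Set E}
    (hf : ContDiffOn ℝ 1 f s) (hconv : Convex ℝ s) (hcomp : IsCompact s)
    (hs : UniqueDiffOn ℝ s) : ∃ K, LipschitzOnWith K f s := by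
  obtain ⟨C, hC⟩ := hcomp.exists_bound_of_continuousOn (hf.continuousOn_fderivWithin hs le_rfl)
  refine ⟨C.toNNReal, hconv.lipschitzOnWith_of_nnnorm_fderivWithin_le
    (hf.differentiableOn one_ne_zero) fun x hx => ?_⟩
  rw [← NNReal.coe_le_coe, coe_nnnorm]
  exact (hC x hx).trans (Real.le_coe_toNNReal C)

theorem LipschitzOnWith.comp_norm_closedBall {E β : Type*} [SeminormedAddCommGroup E]
    [PseudoEMetricSpace β] {f : ℝ → β} {K : ℝ≥0} {R : ℝ}
    (hf : LipschitzOnWith K f (Icc 0 R)) :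
    LipschitzOnWith K (fun x : E => f ‖x‖) (closedBall 0 R) := by
  simpa [Function.comp_def] using hf.comp lipschitzWith_one_norm.lipschitzOnWith
    fun x hx => ⟨norm_nonneg x, mem_closedBall_zero_iff.1 hx⟩

theorem norm_inv_norm_smul_sub_inv_norm_smul_le {E : Type*} [NormedAddCommGroup E]
    [NormedSpace ℝ E] {x y : E} (hle : ‖y‖ ≤ ‖x‖) :
    ‖‖x‖⁻¹ • x - ‖y‖⁻¹ • y‖ ≤ 2 * ‖x - y‖ / ‖x‖ := by
  rcases eq_or_ne y 0 with rfl | hy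
  · rcases eq_or_ne x 0 with rfl | hx
    · simp
    · have hx' : ‖x‖ ≠ 0 := norm_ne_zero_iff.2 hx
      rw [smul_zero, sub_zero, sub_zero, norm_smul, norm_inv, norm_norm, inv_mul_cancel₀ hx',
        mul_div_assoc, div_self hx']
      norm_num
  have hx : 0 < ‖x‖ := (norm_pos_iff.2 hy).trans_le hle
  have hsplit : ‖x‖⁻¹ • x - ‖y‖⁻¹ • y = ‖x‖⁻¹ • (x - y) + (‖x‖⁻¹ - ‖y‖⁻¹) • y := by
    rw [smul_sub, sub_smul]; abel
  have hscale : ‖(‖x‖⁻¹ - ‖y‖⁻¹) • y‖ = (‖x‖ - ‖y‖) / ‖x‖ := by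
    rw [norm_smul, Real.norm_eq_abs, abs_of_nonpos]
    · field_simp
      ring
    · exact sub_nonpos.2 (inv_anti₀ (norm_pos_iff.2 hy) hle)
  calc ‖‖x‖⁻¹ • x - ‖y‖⁻¹ • y‖
      ≤ ‖‖x‖⁻¹ • (x - y)‖ + ‖(‖x‖⁻¹ - ‖y‖⁻¹) • y‖ := hsplit ▸ norm_add_le _ _
    _ = ‖x - y‖ / ‖x‖ + (‖x‖ - ‖y‖) / ‖x‖ := by
      rw [hscale, norm_smul, norm_inv, norm_norm, inv_mul_eq_div]
    _ ≤ 2 * ‖x - y‖ / ‖x‖ := by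
      rw [← add_div, two_mul]
      gcongr
      exact norm_sub_norm_le x y

section EuclideanSpace

variable {ι : Type*} [Fintype ι]

theorem EuclideanSpace.abs_apply_le_norm (x : EuclideanSpace ℝ ι) (j : ι) : |x j| ≤ ‖x‖ :=
  PiLp.norm_apply_le x j

theorem EuclideanSpace.abs_apply_mul_apply_le (x : EuclideanSpace ℝ ι) (j k : ι) :
    |x j * x k| ≤ ‖x‖ ^ 2 := by
  rw [abs_mul, sq]
  exact mul_le_mul (abs_apply_le_norm x j) (abs_apply_le_norm x k) (abs_nonneg _)
    (norm_nonneg _)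

theorem EuclideanSpace.abs_apply_mul_apply_div_norm_sq_le_one (x : EuclideanSpace ℝ ι)
    (j k : ι) : |x j * x k / ‖x‖ ^ 2| ≤ 1 := by
  rw [abs_div, abs_of_nonneg (sq_nonneg ‖x‖)]
  exact div_le_one_of_le₀ (abs_apply_mul_apply_le x j k) (by positivity)

theorem EuclideanSpace.abs_apply_mul_apply_sub_apply_mul_apply_le {u v : EuclideanSpace ℝ ι}
    (hu : ‖u‖ ≤ 1) (hv : ‖v‖ ≤ 1) (j k : ι) : |u j * u k - v j * v k| ≤ 2 * ‖u - v‖ := by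
  have hcoord : ∀ i, |u i - v i| ≤ ‖u - v‖ := abs_apply_le_norm (u - v)
  calc |u j * u k - v j * v k| = |u j * (u k - v k) + (u j - v j) * v k| := by ring_nf
    _ ≤ |u j| * |u k - v k| + |u j - v j| * |v k| := by
      rw [← abs_mul, ← abs_mul]; exact abs_add_le _ _
    _ ≤ 1 * ‖u - v‖ + ‖u - v‖ * 1 := by
      gcongr
      exacts [(abs_apply_le_norm u j).trans hu, hcoord k, hcoord j,
        (abs_apply_le_norm v k).trans hv]
    _ = 2 * ‖u - v‖ := by ring

theorem EuclideanSpace.norm_mul_abs_apply_mul_apply_div_norm_sq_sub_le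
    {x y : EuclideanSpace ℝ ι} (hle : ‖y‖ ≤ ‖x‖) (j k : ι) :
    ‖y‖ * |x j * x k / ‖x‖ ^ 2 - y j * y k / ‖y‖ ^ 2| ≤ 4 * ‖x - y‖ := by
  rcases eq_or_ne y 0 with rfl | hy
  · simp
  have hy' : 0 < ‖y‖ := norm_pos_iff.2 hy
  have hx' : 0 < ‖x‖ := hy'.trans_le hle
  have hq : ∀ z : EuclideanSpace ℝ ι,
      z j * z k / ‖z‖ ^ 2 = (‖z‖⁻¹ • z) j * (‖z‖⁻¹ • z) k := fun z => by
    simp only [PiLp.smul_apply, smul_eq_mul]; ring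
  have hunit : ∀ z : EuclideanSpace ℝ ι, 0 < ‖z‖ → ‖‖z‖⁻¹ • z‖ ≤ 1 := fun z hz => by
    rw [norm_smul_of_nonneg (inv_nonneg.2 (norm_nonneg z)), inv_mul_cancel₀ hz.ne']
  rw [hq x, hq y]
  calc ‖y‖ * |(‖x‖⁻¹ • x) j * (‖x‖⁻¹ • x) k - (‖y‖⁻¹ • y) j * (‖y‖⁻¹ • y) k|
      ≤ ‖y‖ * (2 * (2 * ‖x - y‖ / ‖x‖)) := by
        gcongr
        exact (abs_apply_mul_apply_sub_apply_mul_apply_le (hunit x hx') (hunit y hy') j k).trans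
          (by gcongr; exact norm_inv_norm_smul_sub_inv_norm_smul_le hle)
    _ = 4 * ‖x - y‖ * (‖y‖ / ‖x‖) := by ring
    _ ≤ 4 * ‖x - y‖ * 1 := by gcongr; exact div_le_one_of_le₀ hle hx'.le
    _ = 4 * ‖x - y‖ := mul_one _

theorem LipschitzOnWith.apply_mul_apply_mul_div_norm_sq {s : Set (EuclideanSpace ℝ ι)}
    {f : EuclideanSpace ℝ ι → ℝ} {K : ℝ≥0} (hf : LipschitzOnWith K f s) (h0 : 0 ∈ s)
    (hf0 : f 0 = 0) (j k : ι) :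
    LipschitzOnWith (5 * K) (fun x => x j * x k * f x / ‖x‖ ^ 2) s := by
  set q : EuclideanSpace ℝ ι → ℝ := fun x => x j * x k / ‖x‖ ^ 2
  have key : ∀ x ∈ s, ∀ y ∈ s, ‖y‖ ≤ ‖x‖ →
      |x j * x k * f x / ‖x‖ ^ 2 - y j * y k * f y / ‖y‖ ^ 2| ≤ 5 * K * ‖x - y‖ := by
    intro x hx y hy hle
    have hfxy : |f x - f y| ≤ K * ‖x - y‖ := by
      simpa [Real.dist_eq, dist_eq_norm] using hf.dist_le_mul x hx y hy
    have hfy : |f y| ≤ K * ‖y‖ := by simpa [Real.dist_eq, hf0] using hf.dist_le_mul y hy 0 h0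
    have hqx : |q x| ≤ 1 := EuclideanSpace.abs_apply_mul_apply_div_norm_sq_le_one x j k
    have hqxy : ‖y‖ * |q x - q y| ≤ 4 * ‖x - y‖ :=
      EuclideanSpace.norm_mul_abs_apply_mul_apply_div_norm_sq_sub_le hle j k
    calc |x j * x k * f x / ‖x‖ ^ 2 - y j * y k * f y / ‖y‖ ^ 2|
        = |q x * (f x - f y) + f y * (q x - q y)| := by simp only [q]; ring_nf
      _ ≤ |q x| * |f x - f y| + |f y| * |q x - q y| := by
        rw [← abs_mul, ← abs_mul]; exact abs_add_le _ _
      _ ≤ 1 * (K * ‖x - y‖) + K * ‖y‖ * |q x - q y| := by gcongr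
      _ = 1 * (K * ‖x - y‖) + K * (‖y‖ * |q x - q y|) := by ring
      _ ≤ 1 * (K * ‖x - y‖) + K * (4 * ‖x - y‖) := by gcongr
      _ = 5 * K * ‖x - y‖ := by ring
  refine LipschitzOnWith.of_dist_le_mul fun x hx y hy => ?_
  rw [Real.dist_eq, dist_eq_norm, NNReal.coe_mul, NNReal.coe_ofNat]
  rcases le_total ‖y‖ ‖x‖ with hle | hle
  · exact key x hx y hy hle
  · rw [abs_sub_comm, norm_sub_rev]
    exact key y hy x hx hle

end EuclideanSpace

-- At `x = 0` the quotient vanishes by the convention `t / 0 = 0`.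
theorem aCoefExt_eq {a b d : ℝ → ℝ} {c : EuclideanSpace ℝ (Fin 3) → ℝ} (hbc0 : b 0 + c 0 = 0)
    (x : EuclideanSpace ℝ (Fin 3)) (j k : Fin 3) :
    aCoefExt a b d c x j k = (if j = k then a ‖x‖ + b ‖x‖ + c x else 0)
      - x j * x k * (b ‖x‖ + c x + d ‖x‖) / ‖x‖ ^ 2 := by
  rcases eq_or_ne x 0 with rfl | hx
  · by_cases hjk : j = k <;> simp [aCoefExt, hjk]
    linarith
  · have hx' : ‖x‖ ≠ 0 := norm_ne_zero_iff.2 hx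
    by_cases hjk : j = k
    · subst hjk
      simp only [aCoefExt, aCoef, if_neg hx, if_true]
      field_simp
      ring
    · simp only [aCoefExt, aCoef, if_neg hx, if_neg hjk]
      ring

theorem lipschitzOnWith_aCoefExt {R : ℝ} (hR : 0 ≤ R) {a b d : ℝ → ℝ}
    {c : EuclideanSpace ℝ (Fin 3) → ℝ} {Ka Kb Kc Kd : ℝ≥0} (ha : LipschitzOnWith Ka a (Icc 0 R))
    (hb : LipschitzOnWith Kb b (Icc 0 R)) (hd : LipschitzOnWith Kd d (Icc 0 R))
    (hc : LipschitzOnWith Kc c (closedBall 0 R)) (hbc0 : b 0 + c 0 = 0) (hd0 : d 0 = 0)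
    (j k : Fin 3) :
    LipschitzOnWith (Ka + Kb + Kc + 5 * (Kb + Kc + Kd)) (fun x => aCoefExt a b d c x j k)
      (closedBall 0 R) := by
  simp_rw [aCoefExt_eq hbc0]
  have hf := (hb.comp_norm_closedBall.add hc).add hd.comp_norm_closedBall
  refine LipschitzOnWith.sub ?_
    (hf.apply_mul_apply_mul_div_norm_sq (mem_closedBall_self hR) (by simp [hd0, hbc0]) j k)
  by_cases hjk : j = k
  · simpa only [hjk, if_true] using (ha.comp_norm_closedBall.add hb.comp_norm_closedBall).add hc
  · simpa only [hjk, if_false] using (LipschitzWith.const' (0 : ℝ)).lipschitzOnWith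

/-- under the regularity assumptions `a, b, d ∈ C²([0,R])`,
`c ∈ C²(Ω̄)` together with `b(0) + c(0) = 0` and `d(0) = 0`, each extended
coefficient `a_{j,k}` is Lipschitz-continuous on `Ω̄`. -/
theorem stmt3 (R : ℝ) (hR : 0 < R)
    (a b d : ℝ → ℝ) (c : EuclideanSpace ℝ (Fin 3) → ℝ)
    (ha : ContDiffOn ℝ 2 a (Set.Icc 0 R)) (hb : ContDiffOn ℝ 2 b (Set.Icc 0 R))
    (hd : ContDiffOn ℝ 2 d (Set.Icc 0 R))
    (hc : ContDiffOn ℝ 2 c (Metric.closedBall 0 R))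
    (hbc0 : b 0 + c 0 = 0) (hd0 : d 0 = 0) :
    ∃ L : ℝ, 0 < L ∧
      ∀ x ∈ Metric.closedBall (0 : EuclideanSpace ℝ (Fin 3)) R,
        ∀ y ∈ Metric.closedBall (0 : EuclideanSpace ℝ (Fin 3)) R,
          ∀ j k : Fin 3,
            |aCoefExt a b d c x j k - aCoefExt a b d c y j k| ≤ L * ‖x - y‖ := by
  have hIcc := uniqueDiffOn_Icc hR
  have hball : UniqueDiffOn ℝ (closedBall (0 : EuclideanSpace ℝ (Fin 3)) R) :=
    uniqueDiffOn_convex (convex_closedBall 0 R) (by simp [interior_closedBall _ hR.ne', hR])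
  obtain ⟨Ka, ha⟩ := (ha.of_le one_le_two).exists_lipschitzOnWith_of_isCompact
    (convex_Icc 0 R) isCompact_Icc hIcc
  obtain ⟨Kb, hb⟩ := (hb.of_le one_le_two).exists_lipschitzOnWith_of_isCompact
    (convex_Icc 0 R) isCompact_Icc hIcc
  obtain ⟨Kd, hd⟩ := (hd.of_le one_le_two).exists_lipschitzOnWith_of_isCompact
    (convex_Icc 0 R) isCompact_Icc hIcc
  obtain ⟨Kc, hc⟩ := (hc.of_le one_le_two).exists_lipschitzOnWith_of_isCompact
    (convex_closedBall 0 R) (isCompact_closedBall 0 R) hball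
  set K : ℝ≥0 := Ka + Kb + Kc + 5 * (Kb + Kc + Kd)
  refine ⟨K + 1, by positivity, fun x hx y hy j k => ?_⟩
  have hlip := (lipschitzOnWith_aCoefExt hR.le ha hb hd hc hbc0 hd0 j k).dist_le_mul x hx y hy
  rw [Real.dist_eq, dist_eq_norm] at hlip
  exact hlip.trans (by gcongr; linarith)
end

section
/- Let R > 0 and let p > 3 be a real number. Let q : (0,R) → ℝ be measurable with ∫₀^R r²|q(r)|^p dr < ∞. Then for every r ∈ (0,R) the function q is integrable on (r,R), and the operator (Eq)(r) = ∫_r^R q(ξ) dξ satisfies ∫₀^R r² |(Eq)(r)|^p dr ≤ (R^p/3) ((p−1)/(p−3))^{p−1} ∫₀^R r²|q(r)|^p dr. Consequently E maps the weighted space L_2^p(0,R) continuously into itself (and, since D_r Eq = −q, into the weighted Sobolev space W_2^{1,p}(0,R)). -/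
/-!
Hölder's inequality with the weight `ξ²` gives, for every `r`,
`|∫_r^R q|^p ≤ (∫_r^R ξ²|q|^p) (∫_r^R ξ^(-2/(p-1)))^(p-1)`, and the second factor is bounded
uniformly in `r` by `(R^((p-3)/(p-1)) (p-1)/(p-3))^(p-1)` precisely because `p > 3` makes
`ξ^(-2/(p-1))` integrable at `0`. Integrating this uniform bound against `r²` produces the
factor `R³/3`.
-/

open Real MeasureTheory Set

lemma Real.abs_rpow_inv_mul_rpow {p a b : ℝ} (hp : p ≠ 0) (ha : 0 ≤ a) :
    |a ^ p⁻¹ * b| ^ p = a * |b| ^ p := by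
  rw [abs_mul, abs_of_nonneg (rpow_nonneg ha _), mul_rpow (rpow_nonneg ha _) (abs_nonneg _),
    rpow_inv_rpow ha hp]

lemma Real.abs_rpow_neg_inv_rpow_conjExponent {p a : ℝ} (hp : 1 < p) (ha : 0 ≤ a) :
    |a ^ (-p⁻¹)| ^ p.conjExponent = a ^ (-(p - 1)⁻¹) := by
  rw [abs_of_nonneg (rpow_nonneg ha _), ← rpow_mul ha, Real.conjExponent]
  congr 1
  field_simp

lemma Real.rpow_inv_mul_mul_rpow_neg_inv {p a b : ℝ} (ha : 0 < a) :
    a ^ p⁻¹ * b * a ^ (-p⁻¹) = b := by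
  rw [rpow_neg ha.le, mul_right_comm, mul_inv_cancel₀ (rpow_pos_of_pos ha _).ne', one_mul]

section WeightedHolder

variable {α : Type*} [MeasurableSpace α] {μ : Measure α} {p : ℝ} {w f : α → ℝ}

lemma memLp_ofReal_of_integrable_abs_rpow (hp : 0 < p) (hf : AEStronglyMeasurable f μ)
    (h : Integrable (fun x => |f x| ^ p) μ) : MemLp f (ENNReal.ofReal p) μ := by
  refine (integrable_norm_rpow_iff hf (by simpa using hp) ENNReal.ofReal_ne_top).1 ?_
  simpa [ENNReal.toReal_ofReal hp.le] using h

lemma memLp_weight_rpow_inv_mul (hp : 0 < p) (hw : AEStronglyMeasurable w μ)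
    (hf : AEStronglyMeasurable f μ) (hw_nonneg : ∀ᵐ x ∂μ, 0 ≤ w x)
    (hwf : Integrable (fun x => w x * |f x| ^ p) μ) :
    MemLp (fun x => w x ^ p⁻¹ * f x) (ENNReal.ofReal p) μ := by
  refine memLp_ofReal_of_integrable_abs_rpow hp
    ((hw.aemeasurable.pow_const _).aestronglyMeasurable.mul hf) (hwf.congr ?_)
  filter_upwards [hw_nonneg] with x hx
  rw [abs_rpow_inv_mul_rpow hp.ne' hx]

lemma memLp_weight_rpow_neg_inv (hp : 1 < p) (hw : AEStronglyMeasurable w μ)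
    (hw_nonneg : ∀ᵐ x ∂μ, 0 ≤ w x) (hw_dual : Integrable (fun x => w x ^ (-(p - 1)⁻¹)) μ) :
    MemLp (fun x => w x ^ (-p⁻¹)) (ENNReal.ofReal p.conjExponent) μ := by
  refine memLp_ofReal_of_integrable_abs_rpow (Real.HolderConjugate.conjExponent hp).symm.pos
    (hw.aemeasurable.pow_const _).aestronglyMeasurable (hw_dual.congr ?_)
  filter_upwards [hw_nonneg] with x hx
  rw [abs_rpow_neg_inv_rpow_conjExponent hp hx]

theorem integrable_of_integrable_weight_mul_abs_rpow (hp : 1 < p)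
    (hw : AEStronglyMeasurable w μ) (hf : AEStronglyMeasurable f μ) (hw_pos : ∀ᵐ x ∂μ, 0 < w x)
    (hwf : Integrable (fun x => w x * |f x| ^ p) μ)
    (hw_dual : Integrable (fun x => w x ^ (-(p - 1)⁻¹)) μ) :
    Integrable f μ := by
  have := (Real.HolderConjugate.conjExponent hp).ennrealOfReal
  have hw_nonneg : ∀ᵐ x ∂μ, 0 ≤ w x := hw_pos.mono fun _ hx => hx.le
  refine ((memLp_weight_rpow_inv_mul (by linarith) hw hf hw_nonneg hwf).integrable_mul
    (memLp_weight_rpow_neg_inv hp hw hw_nonneg hw_dual)).congr ?_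
  filter_upwards [hw_pos] with x hx
  exact rpow_inv_mul_mul_rpow_neg_inv hx

theorem abs_integral_rpow_le_weighted (hp : 1 < p)
    (hw : AEStronglyMeasurable w μ) (hf : AEStronglyMeasurable f μ) (hw_pos : ∀ᵐ x ∂μ, 0 < w x)
    (hwf : Integrable (fun x => w x * |f x| ^ p) μ)
    (hw_dual : Integrable (fun x => w x ^ (-(p - 1)⁻¹)) μ) :
    |∫ x, f x ∂μ| ^ p ≤
      (∫ x, w x * |f x| ^ p ∂μ) * (∫ x, w x ^ (-(p - 1)⁻¹) ∂μ) ^ (p - 1) := by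
  have hpq := Real.HolderConjugate.conjExponent hp
  have hw_nonneg : ∀ᵐ x ∂μ, 0 ≤ w x := hw_pos.mono fun _ hx => hx.le
  have holder := integral_mul_norm_le_Lp_mul_Lq hpq
    (memLp_weight_rpow_inv_mul hpq.pos hw hf hw_nonneg hwf)
    (memLp_weight_rpow_neg_inv hp hw hw_nonneg hw_dual)
  have h_prod : ∫ x, ‖w x ^ p⁻¹ * f x‖ * ‖w x ^ (-p⁻¹)‖ ∂μ = ∫ x, |f x| ∂μ := by
    refine integral_congr_ae ?_
    filter_upwards [hw_pos] with x hx
    rw [Real.norm_eq_abs, Real.norm_eq_abs, ← abs_mul, rpow_inv_mul_mul_rpow_neg_inv hx]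
  have h_left : ∫ x, ‖w x ^ p⁻¹ * f x‖ ^ p ∂μ = ∫ x, w x * |f x| ^ p ∂μ := by
    refine integral_congr_ae ?_
    filter_upwards [hw_nonneg] with x hx
    rw [Real.norm_eq_abs, abs_rpow_inv_mul_rpow hpq.pos.ne' hx]
  have h_right : ∫ x, ‖w x ^ (-p⁻¹)‖ ^ p.conjExponent ∂μ = ∫ x, w x ^ (-(p - 1)⁻¹) ∂μ := by
    refine integral_congr_ae ?_
    filter_upwards [hw_nonneg] with x hx
    rw [Real.norm_eq_abs, abs_rpow_neg_inv_rpow_conjExponent hp hx]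
  rw [h_prod, h_left, h_right] at holder
  set A := ∫ x, w x * |f x| ^ p ∂μ
  set B := ∫ x, w x ^ (-(p - 1)⁻¹) ∂μ
  have hA : 0 ≤ A := integral_nonneg_of_ae <| by
    filter_upwards [hw_nonneg] with x hx
    positivity
  have hB : 0 ≤ B := integral_nonneg_of_ae <| by
    filter_upwards [hw_nonneg] with x hx
    positivity
  calc |∫ x, f x ∂μ| ^ p ≤ ((A ^ (1 / p)) * B ^ (1 / p.conjExponent)) ^ p := by
        gcongr
        exact abs_integral_le_integral_abs.trans holder
    _ = A * B ^ (p - 1) := by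
        rw [mul_rpow (by positivity) (by positivity), ← rpow_mul hA, ← rpow_mul hB,
          one_div_mul_cancel hpq.pos.ne', rpow_one, Real.conjExponent]
        congr 2
        field_simp

end WeightedHolder

lemma setIntegral_Ioc_rpow_le {c r R : ℝ} (hc : -1 < c) (hr : 0 ≤ r) (hrR : r ≤ R) :
    ∫ x in Ioc r R, x ^ c ≤ R ^ (c + 1) / (c + 1) := by
  have hc1 : 0 < c + 1 := by linarith
  rw [← intervalIntegral.integral_of_le hrR, integral_rpow (Or.inl hc)]
  gcongr
  exact sub_le_self _ (rpow_nonneg hr _)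

lemma setIntegral_Ioo_sq_mul_le {R C : ℝ} (hR : 0 ≤ R) {F : ℝ → ℝ}
    (hF_nonneg : ∀ r ∈ Ioo 0 R, 0 ≤ F r) (hF_le : ∀ r ∈ Ioo 0 R, F r ≤ C) :
    ∫ r in Ioo 0 R, r ^ 2 * F r ≤ C * (R ^ 3 / 3) := by
  have h_sq : IntegrableOn (fun r : ℝ => C * r ^ 2) (Ioo 0 R) :=
    (continuous_const.mul (continuous_pow 2)).integrableOn_Icc.mono_set Ioo_subset_Icc_self
  calc ∫ r in Ioo 0 R, r ^ 2 * F r ≤ ∫ r in Ioo 0 R, C * r ^ 2 := by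
        refine setIntegral_mono_of_nonneg (fun r hr => mul_nonneg (sq_nonneg r) (hF_nonneg r hr))
          (fun r hr => ?_) h_sq
        rw [mul_comm C]
        exact mul_le_mul_of_nonneg_left (hF_le r hr) (sq_nonneg r)
    _ = C * (R ^ 3 / 3) := by
        rw [integral_const_mul, setIntegral_congr_set Ioo_ae_eq_Ioc,
          ← intervalIntegral.integral_of_le hR, integral_pow]
        norm_num

lemma sq_rpow_neg_inv_sub_one {p x : ℝ} (hx : 0 ≤ x) :
    (x ^ 2) ^ (-(p - 1)⁻¹) = x ^ (-2 / (p - 1)) := by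
  rw [← rpow_natCast, ← rpow_mul hx]
  congr 1
  push_cast
  ring

lemma rpow_div_div_rpow_sub_one {p R : ℝ} (hp : 3 < p) (hR : 0 ≤ R) :
    (R ^ ((p - 3) / (p - 1)) / ((p - 3) / (p - 1))) ^ (p - 1) =
      R ^ (p - 3) * ((p - 1) / (p - 3)) ^ (p - 1) := by
  have hp1 : 0 < p - 1 := by linarith
  have hp3 : 0 < p - 3 := by linarith
  rw [div_rpow (rpow_nonneg hR _) (by positivity), ← rpow_mul hR, div_mul_cancel₀ _ hp1.ne',
    div_eq_mul_inv, ← inv_rpow (by positivity), inv_div]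

theorem integrableOn_Ioc_and_abs_integral_rpow_le {p r R : ℝ} (hp : 3 < p) (hr : 0 ≤ r)
    (hrR : r ≤ R) {q : ℝ → ℝ} (hq : AEStronglyMeasurable q (volume.restrict (Ioc r R)))
    (hint : IntegrableOn (fun ξ => ξ ^ 2 * |q ξ| ^ p) (Ioc r R)) :
    IntegrableOn q (Ioc r R) ∧
      |∫ ξ in Ioc r R, q ξ| ^ p ≤
        R ^ (p - 3) * ((p - 1) / (p - 3)) ^ (p - 1) * ∫ ξ in Ioc r R, ξ ^ 2 * |q ξ| ^ p := by
  have hp1 : 1 < p := by linarith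
  have hc : -1 < -2 / (p - 1) := by
    rw [lt_div_iff₀ (by linarith)]
    linarith
  have hc1 : -2 / (p - 1) + 1 = (p - 3) / (p - 1) := by
    field_simp [(by linarith : p - 1 ≠ 0)]
    ring
  have h_mem : ∀ᵐ ξ ∂volume.restrict (Ioc r R), 0 < ξ := by
    filter_upwards [ae_restrict_mem measurableSet_Ioc] with ξ hξ
    exact hr.trans_lt hξ.1
  have hw : AEStronglyMeasurable (fun ξ : ℝ => ξ ^ 2) (volume.restrict (Ioc r R)) :=
    (continuous_pow 2).aestronglyMeasurable
  have hw_pos : ∀ᵐ ξ ∂volume.restrict (Ioc r R), 0 < ξ ^ 2 :=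
    h_mem.mono fun ξ hξ => by positivity
  have h_dual : (fun ξ : ℝ => (ξ ^ 2) ^ (-(p - 1)⁻¹)) =ᵐ[volume.restrict (Ioc r R)]
      fun ξ => ξ ^ (-2 / (p - 1)) :=
    h_mem.mono fun ξ hξ => sq_rpow_neg_inv_sub_one hξ.le
  have hw_dual : IntegrableOn (fun ξ : ℝ => (ξ ^ 2) ^ (-(p - 1)⁻¹)) (Ioc r R) :=
    (intervalIntegral.intervalIntegrable_rpow' hc).1.congr h_dual.symm
  refine ⟨integrable_of_integrable_weight_mul_abs_rpow hp1 hw hq hw_pos hint hw_dual, ?_⟩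
  have h_dual_le : ∫ ξ in Ioc r R, (ξ ^ 2) ^ (-(p - 1)⁻¹) ≤
      R ^ ((p - 3) / (p - 1)) / ((p - 3) / (p - 1)) := by
    rw [integral_congr_ae h_dual, ← hc1]
    exact setIntegral_Ioc_rpow_le hc hr hrR
  calc |∫ ξ in Ioc r R, q ξ| ^ p
      ≤ (∫ ξ in Ioc r R, ξ ^ 2 * |q ξ| ^ p) * (∫ ξ in Ioc r R, (ξ ^ 2) ^ (-(p - 1)⁻¹)) ^ (p - 1) :=
        abs_integral_rpow_le_weighted hp1 hw hq hw_pos hint hw_dual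
    _ ≤ (∫ ξ in Ioc r R, ξ ^ 2 * |q ξ| ^ p) *
          (R ^ ((p - 3) / (p - 1)) / ((p - 3) / (p - 1))) ^ (p - 1) := by
        gcongr
    _ = _ := by rw [rpow_div_div_rpow_sub_one hp (hr.trans hrR), mul_comm]

/-- for `p > 3` and `q ∈ L₂^p(0,R)`, `q` is integrable on `(r,R)`
for every `r ∈ (0,R)` and the operator `(Eq)(r) = ∫_r^R q(ξ) dξ` satisfies
`∫₀^R r² |(Eq)(r)|^p dr ≤ (R^p/3) ((p-1)/(p-3))^{p-1} ∫₀^R r²|q(r)|^p dr`,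
so that `E` maps `L₂^p(0,R)` continuously into itself. -/
theorem stmt11 (R p : ℝ) (hR : 0 < R) (hp : 3 < p)
    (q : ℝ → ℝ) (hq : Measurable q)
    (hint : IntegrableOn (fun r => r ^ 2 * |q r| ^ p) (Set.Ioo 0 R)) :
    (∀ r ∈ Set.Ioo (0:ℝ) R, IntegrableOn q (Set.Ioc r R))
    ∧ ∫ r in Set.Ioo (0:ℝ) R, r ^ 2 * |∫ ξ in Set.Ioc r R, q ξ| ^ p
        ≤ R ^ p / 3 * ((p - 1) / (p - 3)) ^ (p - 1) *
            ∫ r in Set.Ioo (0:ℝ) R, r ^ 2 * |q r| ^ p := by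
  have hint' : IntegrableOn (fun r => r ^ 2 * |q r| ^ p) (Ioc 0 R) :=
    hint.congr_set_ae Ioo_ae_eq_Ioc.symm
  have h_local (r : ℝ) (hr : r ∈ Ioo 0 R) :=
    integrableOn_Ioc_and_abs_integral_rpow_le hp hr.1.le hr.2.le hq.aestronglyMeasurable
      (hint'.mono_set (Ioc_subset_Ioc_left hr.1.le))
  refine ⟨fun r hr => (h_local r hr).1, ?_⟩
  have h_sub (r : ℝ) (hr : r ∈ Ioo 0 R) :
      ∫ ξ in Ioc r R, ξ ^ 2 * |q ξ| ^ p ≤ ∫ ξ in Ioo 0 R, ξ ^ 2 * |q ξ| ^ p :=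
    (setIntegral_mono_set hint' (Filter.Eventually.of_forall fun ξ => by positivity)
      (Ioc_subset_Ioc_left hr.1.le).eventuallyLE).trans_eq
      (setIntegral_congr_set Ioo_ae_eq_Ioc).symm
  have hK : 0 ≤ R ^ (p - 3) * ((p - 1) / (p - 3)) ^ (p - 1) := by
    have : 0 ≤ (p - 1) / (p - 3) := div_nonneg (by linarith) (by linarith)
    positivity
  have hRp : R ^ p = R ^ (p - 3) * R ^ 3 := by
    rw [← rpow_natCast, ← rpow_add hR]
    norm_num
  calc ∫ r in Ioo 0 R, r ^ 2 * |∫ ξ in Ioc r R, q ξ| ^ p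
      ≤ R ^ (p - 3) * ((p - 1) / (p - 3)) ^ (p - 1) * (∫ ξ in Ioo 0 R, ξ ^ 2 * |q ξ| ^ p) *
          (R ^ 3 / 3) :=
        setIntegral_Ioo_sq_mul_le hR.le (fun r _ => by positivity) fun r hr =>
          (h_local r hr).2.trans (mul_le_mul_of_nonneg_left (h_sub r hr) hK)
    _ = _ := by
        rw [hRp]
        ring
end

section
/- Assume a, b, d ∈ C¹([0,R]) and c ∈ C¹(Ω̄₂), and let w : ℝ² → ℝ be twice continuously differentiable on a neighbourhood of Ω̄₂. For x ∈ Ω₂ \ {0} let (A w)(x) = Σ_{j,k=1}^{2} ∂_{x_j}(a_{j,k}(·) ∂_{x_k} w)(x) denote the divergence-form operator with coefficients a_{j,k}. Then for every r ∈ (0,R) the circular mean Φ[w] is twice differentiable at r and Φ[A w](r) = h(r)(Φ[w])''(r) + h'(r)(Φ[w])'(r) + (h(r)/r)(Φ[w])'(r), where h(r) = a(r) − d(r); that is, Φ ∘ A = Ã₁ ∘ Φ with Ã₁ = D_r(h(r) D_r) + (h(r)/r) D_r. -/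
open Real MeasureTheory

/-- The circular mean operator `Φ[v](r) = ∫₀^{2π} v(r(cos φ, sin φ)) dφ`. -/
noncomputable def Phi2 (v : EuclideanSpace ℝ (Fin 2) → ℝ) (r : ℝ) : ℝ :=
  ∫ φ in (0:ℝ)..(2 * Real.pi),
    v (r • (EuclideanSpace.equiv (Fin 2) ℝ).symm ![Real.cos φ, Real.sin φ])

/-- The 2×2 matrix coefficients `a_{j,k}(x)` from the paper, for `x ≠ 0`.
For the diagonal entries we use that e.g. `x₂² = |x|² - x₁²`. -/
noncomputable def aCoef2 (a b d : ℝ → ℝ) (c : EuclideanSpace ℝ (Fin 2) → ℝ)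
    (x : EuclideanSpace ℝ (Fin 2)) (j k : Fin 2) : ℝ :=
  if j = k then
    a ‖x‖ + (‖x‖ ^ 2 - x j ^ 2) * (c x + b ‖x‖) / ‖x‖ ^ 2 - x j ^ 2 * d ‖x‖ / ‖x‖ ^ 2
  else
    -(x j * x k * (b ‖x‖ + c x + d ‖x‖)) / ‖x‖ ^ 2

/-- The partial derivative `∂_{x_i} f` in two dimensions. -/
noncomputable def pd2 (i : Fin 2) (f : EuclideanSpace ℝ (Fin 2) → ℝ) :
    EuclideanSpace ℝ (Fin 2) → ℝ :=
  fun x => fderiv ℝ f x (EuclideanSpace.single i 1)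

/-- The divergence-form operator `A w = Σ_{j,k} ∂_{x_j}(a_{j,k} ∂_{x_k} w)`
in two dimensions. -/
noncomputable def Aop2 (a b d : ℝ → ℝ) (c : EuclideanSpace ℝ (Fin 2) → ℝ)
    (w : EuclideanSpace ℝ (Fin 2) → ℝ) : EuclideanSpace ℝ (Fin 2) → ℝ :=
  fun x => ∑ j, ∑ k, pd2 j (fun y => aCoef2 a b d c y j k * pd2 k w y) x

/-!
The operator is in divergence form, `A w = ∑ⱼ ∂ⱼ Fⱼ` with flux `Fⱼ = ∑ₖ a_{j,k} ∂ₖ w`. At `x ≠ 0`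
the `b`- and `c`-parts of the coefficient matrix annihilate `x`, and `x` is an eigenvector of the
rest with eigenvalue `a - d`; hence on the circle `|x| = r` the normal flux is `F · e = h(r) ∂ᵣ w`
with `e = (cos ψ, sin ψ)`. Computing the divergence in the rotated frame `(e, e')` gives
`div F = ∂ᵣ (F · e) + (F · e) / r + r⁻¹ ∂_ψ (F · e')`, and the last term integrates to zero over
the circle by periodicity. Differentiating under the integral sign,
`(Φ w)' = ∫ ∂ᵣ w` and `(Φ w)'' = ∫ ∂ᵣ² w`, which yields the formula.
-/

open Metric Set

local notation "ℝ²" => EuclideanSpace ℝ (Fin 2)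

lemma EuclideanSpace.clm_apply_eq_sum {ι : Type*} [Fintype ι] [DecidableEq ι]
    (L : EuclideanSpace ℝ ι →L[ℝ] ℝ) (x : EuclideanSpace ℝ ι) :
    L x = ∑ k, L (EuclideanSpace.single k 1) * x k := by
  conv_lhs => rw [← (EuclideanSpace.basisFun ι ℝ).sum_repr x]
  simp [mul_comm]

lemma hasDerivAt_intervalIntegral_of_continuousOn {E : Type*} [NormedAddCommGroup E]
    [NormedSpace ℝ E] {G G' : ℝ → ℝ → E} {S : Set ℝ} (hS : IsOpen S) {s a b : ℝ} (hs : s ∈ S)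
    (hG : ∀ t ∈ S, Continuous (G t)) (hG' : ContinuousOn (Function.uncurry G') (S ×ˢ univ))
    (hderiv : ∀ t ∈ S, ∀ ψ, HasDerivAt (G · ψ) (G' t ψ) t) :
    HasDerivAt (fun t => ∫ ψ in a..b, G t ψ) (∫ ψ in a..b, G' s ψ) s := by
  obtain ⟨ε, hε, hεS⟩ := Metric.isOpen_iff.1 hS s hs
  have hball : ball s (ε / 2) ⊆ S := (ball_subset_ball (half_le_self hε.le)).trans hεS
  have hclosed : closedBall s (ε / 2) ⊆ S :=
    (closedBall_subset_ball (half_lt_self hε)).trans hεS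
  obtain ⟨M, hM⟩ :=
    ((isCompact_closedBall s (ε / 2)).prod isCompact_uIcc).exists_bound_of_continuousOn
      (hG'.mono (prod_mono hclosed (subset_univ (uIcc a b))))
  have hG's : Continuous (G' s) :=
    hG'.comp_continuous (Continuous.prodMk_right s) fun ψ => ⟨hs, mem_univ ψ⟩
  refine (intervalIntegral.hasDerivAt_integral_of_dominated_loc_of_deriv_le (bound := fun _ => M)
    (ball_mem_nhds s (half_pos hε)) ?_ ((hG s hs).intervalIntegrable a b)
    hG's.aestronglyMeasurable.restrict ?_ intervalIntegrable_const ?_).2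
  · filter_upwards [ball_mem_nhds s (half_pos hε)] with t ht
    exact (hG t (hball ht)).aestronglyMeasurable.restrict
  · refine MeasureTheory.ae_of_all _ fun ψ hψ t ht => hM (t, ψ) ⟨ball_subset_closedBall ht, ?_⟩
    exact uIoc_subset_uIcc hψ
  · exact MeasureTheory.ae_of_all _ fun ψ _ t ht => hderiv t (hball ht) ψ

noncomputable def unitRadial (ψ : ℝ) : ℝ² :=
  (EuclideanSpace.equiv (Fin 2) ℝ).symm ![cos ψ, sin ψ]

noncomputable def unitTangent (ψ : ℝ) : ℝ² :=
  (EuclideanSpace.equiv (Fin 2) ℝ).symm ![-sin ψ, cos ψ]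

@[simp] lemma unitRadial_apply_zero (ψ : ℝ) : unitRadial ψ 0 = cos ψ := rfl
@[simp] lemma unitRadial_apply_one (ψ : ℝ) : unitRadial ψ 1 = sin ψ := rfl
@[simp] lemma unitTangent_apply_zero (ψ : ℝ) : unitTangent ψ 0 = -sin ψ := rfl
@[simp] lemma unitTangent_apply_one (ψ : ℝ) : unitTangent ψ 1 = cos ψ := rfl

lemma norm_unitRadial (ψ : ℝ) : ‖unitRadial ψ‖ = 1 := by
  simp [EuclideanSpace.norm_eq, Fin.sum_univ_two]

lemma hasDerivAt_unitRadial (ψ : ℝ) : HasDerivAt unitRadial (unitTangent ψ) ψ := by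
  have h : HasDerivAt (fun φ => ![cos φ, sin φ]) ![-sin ψ, cos ψ] ψ := by
    rw [hasDerivAt_pi]
    intro i
    fin_cases i
    · simpa using hasDerivAt_cos ψ
    · simpa using hasDerivAt_sin ψ
  exact (EuclideanSpace.equiv (Fin 2) ℝ).symm.hasFDerivAt.comp_hasDerivAt ψ h

lemma hasDerivAt_unitTangent (ψ : ℝ) : HasDerivAt unitTangent (-unitRadial ψ) ψ := by
  have h : HasDerivAt (fun φ => ![-sin φ, cos φ]) ![-cos ψ, -sin ψ] ψ := by
    rw [hasDerivAt_pi]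
    intro i
    fin_cases i
    · simp only [Fin.zero_eta, Matrix.cons_val_zero]
      exact (hasDerivAt_sin ψ).neg
    · simpa using hasDerivAt_cos ψ
  refine ((EuclideanSpace.equiv (Fin 2) ℝ).symm.hasFDerivAt.comp_hasDerivAt ψ h).congr_deriv ?_
  ext i
  fin_cases i <;> simp

@[fun_prop]
lemma continuous_unitRadial : Continuous unitRadial :=
  continuous_iff_continuousAt.2 fun ψ => (hasDerivAt_unitRadial ψ).continuousAt

@[fun_prop]
lemma continuous_unitTangent : Continuous unitTangent :=
  continuous_iff_continuousAt.2 fun ψ => (hasDerivAt_unitTangent ψ).continuousAt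

lemma unitRadial_two_pi : unitRadial (2 * π) = unitRadial 0 := by
  simp [unitRadial]

lemma unitTangent_two_pi : unitTangent (2 * π) = unitTangent 0 := by
  simp [unitTangent]

lemma single_eq_unitRadial_add_unitTangent (ψ : ℝ) (j : Fin 2) :
    EuclideanSpace.single j (1 : ℝ)
      = unitRadial ψ j • unitRadial ψ + unitTangent ψ j • unitTangent ψ := by
  have h := sin_sq_add_cos_sq ψ
  ext i
  fin_cases j <;> fin_cases i <;> simp <;> linarith

lemma sum_apply_single_eq_frame (L : Fin 2 → ℝ² →L[ℝ] ℝ) (ψ : ℝ) :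
    ∑ j, L j (EuclideanSpace.single j 1)
      = ∑ j, L j (unitRadial ψ) * unitRadial ψ j
        + ∑ j, L j (unitTangent ψ) * unitTangent ψ j := by
  simp only [single_eq_unitRadial_add_unitTangent ψ, map_add, map_smul, smul_eq_mul,
    ← Finset.sum_add_distrib, mul_comm]

lemma smul_unitRadial_mem_ball_diff {R t : ℝ} (ht : t ∈ Ioo 0 R) (ψ : ℝ) :
    t • unitRadial ψ ∈ ball (0 : ℝ²) R \ {0} := by
  have hnorm : ‖t • unitRadial ψ‖ = t := by
    rw [norm_smul, norm_unitRadial, mul_one, Real.norm_of_nonneg ht.1.le]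
  refine ⟨mem_ball_zero_iff.2 (by rw [hnorm]; exact ht.2), fun h => ht.1.ne' ?_⟩
  rw [← hnorm, mem_singleton_iff.1 h, norm_zero]

section PolarDivergence

variable {r ψ : ℝ}

lemma hasDerivAt_radial_comp {X : Type*} [NormedAddCommGroup X] [NormedSpace ℝ X] {f : ℝ² → X}
    (hf : DifferentiableAt ℝ f (r • unitRadial ψ)) :
    HasDerivAt (fun t : ℝ => f (t • unitRadial ψ))
      (fderiv ℝ f (r • unitRadial ψ) (unitRadial ψ)) r :=
  (hf.hasFDerivAt.comp_hasDerivAt r ((hasDerivAt_id r).smul_const (unitRadial ψ))).congr_deriv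
    (by rw [one_smul])

lemma hasDerivAt_angular_comp {f : ℝ² → ℝ} (hf : DifferentiableAt ℝ f (r • unitRadial ψ)) :
    HasDerivAt (fun φ => f (r • unitRadial φ))
      (r * fderiv ℝ f (r • unitRadial ψ) (unitTangent ψ)) ψ :=
  (hf.hasFDerivAt.comp_hasDerivAt ψ ((hasDerivAt_unitRadial ψ).const_smul r)).congr_deriv
    (by rw [map_smul, smul_eq_mul])

lemma hasDerivAt_fderiv_apply_radial_comp {w : ℝ² → ℝ}
    (hw : DifferentiableAt ℝ (fderiv ℝ w) (r • unitRadial ψ)) :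
    HasDerivAt (fun t : ℝ => fderiv ℝ w (t • unitRadial ψ) (unitRadial ψ))
      (fderiv ℝ (fderiv ℝ w) (r • unitRadial ψ) (unitRadial ψ) (unitRadial ψ)) r :=
  (ContinuousLinearMap.apply ℝ ℝ (unitRadial ψ)).hasFDerivAt.comp_hasDerivAt r
    (hasDerivAt_radial_comp hw)

variable {F : Fin 2 → ℝ² → ℝ}

lemma hasDerivAt_sum_mul_unitRadial (hF : ∀ j, DifferentiableAt ℝ (F j) (r • unitRadial ψ)) :
    HasDerivAt (fun t => ∑ j, F j (t • unitRadial ψ) * unitRadial ψ j)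
      (∑ j, fderiv ℝ (F j) (r • unitRadial ψ) (unitRadial ψ) * unitRadial ψ j) r :=
  HasDerivAt.fun_sum fun j _ => (hasDerivAt_radial_comp (hF j)).mul_const _

lemma hasDerivAt_sum_mul_unitTangent (hF : ∀ j, DifferentiableAt ℝ (F j) (r • unitRadial ψ)) :
    HasDerivAt (fun φ => ∑ j, F j (r • unitRadial φ) * unitTangent φ j)
      (r * ∑ j, fderiv ℝ (F j) (r • unitRadial ψ) (unitTangent ψ) * unitTangent ψ j
        - ∑ j, F j (r • unitRadial ψ) * unitRadial ψ j) ψ := by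
  have hcoord (j : Fin 2) : HasDerivAt (fun φ => unitTangent φ j) (-unitRadial ψ j) ψ :=
    (EuclideanSpace.proj j : ℝ² →L[ℝ] ℝ).hasFDerivAt.comp_hasDerivAt ψ
      (hasDerivAt_unitTangent ψ)
  refine (HasDerivAt.fun_sum fun j _ =>
    (hasDerivAt_angular_comp (hF j)).mul (hcoord j)).congr_deriv ?_
  simp only [Finset.mul_sum, ← Finset.sum_sub_distrib]
  exact Finset.sum_congr rfl fun j _ => by ring

lemma integral_sum_pd2_smul_unitRadial {V : Set ℝ²} (hV : IsOpen V)
    (hF : ∀ j, ContDiffOn ℝ 1 (F j) V) (hr : r ≠ 0) (hrV : ∀ ψ, r • unitRadial ψ ∈ V) :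
    ∫ ψ in 0..2 * π, ∑ j, pd2 j (F j) (r • unitRadial ψ)
      = (∫ ψ in 0..2 * π,
          ∑ j, fderiv ℝ (F j) (r • unitRadial ψ) (unitRadial ψ) * unitRadial ψ j)
        + r⁻¹ * ∫ ψ in 0..2 * π, ∑ j, F j (r • unitRadial ψ) * unitRadial ψ j := by
  have hγ : Continuous fun ψ => r • unitRadial ψ := by fun_prop
  have hdiff (ψ : ℝ) (j : Fin 2) : DifferentiableAt ℝ (F j) (r • unitRadial ψ) :=
    ((hF j).differentiableOn one_ne_zero).differentiableAt (hV.mem_nhds (hrV ψ))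
  have hcont (j : Fin 2) : Continuous fun ψ => F j (r • unitRadial ψ) :=
    (hF j).continuousOn.comp_continuous hγ hrV
  have hcont_fderiv (j : Fin 2) {v : ℝ → ℝ²} (hv : Continuous v) :
      Continuous fun ψ => fderiv ℝ (F j) (r • unitRadial ψ) (v ψ) :=
    (((hF j).continuousOn_fderiv_of_isOpen hV le_rfl).comp_continuous hγ hrV).clm_apply hv
  set radial := fun ψ => ∑ j, fderiv ℝ (F j) (r • unitRadial ψ) (unitRadial ψ) * unitRadial ψ j
  set tangential :=
    fun ψ => ∑ j, fderiv ℝ (F j) (r • unitRadial ψ) (unitTangent ψ) * unitTangent ψ j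
  set normal := fun ψ => ∑ j, F j (r • unitRadial ψ) * unitRadial ψ j
  have hradial : Continuous radial := by
    refine continuous_finsetSum _ fun j _ => (hcont_fderiv j ?_).mul ?_ <;> fun_prop
  have htangential : Continuous tangential := by
    refine continuous_finsetSum _ fun j _ => (hcont_fderiv j ?_).mul ?_ <;> fun_prop
  have hnormal : Continuous normal :=
    continuous_finsetSum _ fun j _ => (hcont j).mul (by fun_prop)
  have hint {f : ℝ → ℝ} (hf : Continuous f) : IntervalIntegrable f volume 0 (2 * π) :=
    hf.intervalIntegrable _ _
  have hperiodic : ∫ ψ in 0..2 * π, (r * tangential ψ - normal ψ) = 0 := by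
    rw [intervalIntegral.integral_eq_sub_of_hasDerivAt
      (fun ψ _ => hasDerivAt_sum_mul_unitTangent (hdiff ψ))
      (hint ((continuous_const.mul htangential).sub hnormal))]
    simp only [unitRadial_two_pi, unitTangent_two_pi, sub_self]
  rw [intervalIntegral.integral_sub (hint (htangential.const_mul r)) (hint hnormal),
    intervalIntegral.integral_const_mul, sub_eq_zero] at hperiodic
  have hframe (ψ : ℝ) : ∑ j, pd2 j (F j) (r • unitRadial ψ) = radial ψ + tangential ψ :=
    sum_apply_single_eq_frame (fun j => fderiv ℝ (F j) (r • unitRadial ψ)) ψ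
  simp only [hframe]
  rw [intervalIntegral.integral_add (hint hradial) (hint htangential), ← hperiodic,
    inv_mul_cancel_left₀ hr]

end PolarDivergence

lemma pd2_fun_sum {ι : Type*} {u : Finset ι} {g : ι → ℝ² → ℝ} {x : ℝ²}
    (hg : ∀ k ∈ u, DifferentiableAt ℝ (g k) x) (i : Fin 2) :
    pd2 i (fun y => ∑ k ∈ u, g k y) x = ∑ k ∈ u, pd2 i (g k) x := by
  simp only [pd2, fderiv_fun_sum hg, _root_.sum_apply]

lemma contDiffOn_pd2 {U : Set ℝ²} {w : ℝ² → ℝ} (hU : IsOpen U) (hw : ContDiffOn ℝ 2 w U)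
    (k : Fin 2) : ContDiffOn ℝ 1 (pd2 k w) U :=
  (ContinuousLinearMap.apply ℝ ℝ (EuclideanSpace.single k (1 : ℝ))).contDiff.comp_contDiffOn
    (hw.fderiv_of_isOpen hU (by norm_num))

section Coefficients

variable {R : ℝ} {a b d : ℝ → ℝ} {c w : ℝ² → ℝ}

noncomputable def flux2 (a b d : ℝ → ℝ) (c w : ℝ² → ℝ) (j : Fin 2) (y : ℝ²) : ℝ :=
  ∑ k, aCoef2 a b d c y j k * pd2 k w y

lemma contDiffOn_aCoef2 (ha : ContDiffOn ℝ 1 a (Icc 0 R)) (hb : ContDiffOn ℝ 1 b (Icc 0 R))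
    (hd : ContDiffOn ℝ 1 d (Icc 0 R)) (hc : ContDiffOn ℝ 1 c (closedBall 0 R)) (j k : Fin 2) :
    ContDiffOn ℝ 1 (fun y => aCoef2 a b d c y j k) (ball 0 R \ {0}) := by
  rintro x ⟨hxR, hx0 : x ≠ 0⟩
  have hnorm : ContDiffAt ℝ 1 (fun y : ℝ² => ‖y‖) x := contDiffAt_norm ℝ hx0
  have hradial {f : ℝ → ℝ} (hf : ContDiffOn ℝ 1 f (Icc 0 R)) :
      ContDiffAt ℝ 1 (fun y : ℝ² => f ‖y‖) x :=
    (hf.contDiffAt (Icc_mem_nhds (norm_pos_iff.2 hx0) (mem_ball_zero_iff.1 hxR))).comp x hnorm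
  have hC : ContDiffAt ℝ 1 c x := hc.contDiffAt (closedBall_mem_nhds_of_mem hxR)
  have hcoord (i : Fin 2) : ContDiffAt ℝ 1 (fun y : ℝ² => y i) x :=
    (EuclideanSpace.proj i : ℝ² →L[ℝ] ℝ).contDiff.contDiffAt
  have hne : ‖x‖ ^ 2 ≠ 0 := pow_ne_zero 2 (norm_ne_zero_iff.2 hx0)
  refine ContDiffAt.contDiffWithinAt ?_
  by_cases hjk : j = k
  · simp only [aCoef2, if_pos hjk]
    exact ((hradial ha).add (((hnorm.pow 2).sub ((hcoord j).pow 2)).mul (hC.add (hradial hb))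
      |>.div (hnorm.pow 2) hne)).sub
      ((((hcoord j).pow 2).mul (hradial hd)).div (hnorm.pow 2) hne)
  · simp only [aCoef2, if_neg hjk]
    exact (((hcoord j).mul (hcoord k)).mul (((hradial hb).add hC).add (hradial hd))).neg.div
      (hnorm.pow 2) hne

lemma contDiffOn_flux2 (ha : ContDiffOn ℝ 1 a (Icc 0 R)) (hb : ContDiffOn ℝ 1 b (Icc 0 R))
    (hd : ContDiffOn ℝ 1 d (Icc 0 R)) (hc : ContDiffOn ℝ 1 c (closedBall 0 R))
    (hw : ContDiffOn ℝ 2 w (ball 0 R)) (j : Fin 2) :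
    ContDiffOn ℝ 1 (flux2 a b d c w j) (ball 0 R \ {0}) :=
  ContDiffOn.sum fun k _ => (contDiffOn_aCoef2 ha hb hd hc j k).mul
    ((contDiffOn_pd2 isOpen_ball hw k).mono sdiff_subset)

lemma Aop2_eq_sum_pd2_flux2 (ha : ContDiffOn ℝ 1 a (Icc 0 R))
    (hb : ContDiffOn ℝ 1 b (Icc 0 R)) (hd : ContDiffOn ℝ 1 d (Icc 0 R))
    (hc : ContDiffOn ℝ 1 c (closedBall 0 R)) (hw : ContDiffOn ℝ 2 w (ball 0 R)) {x : ℝ²}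
    (hx : x ∈ ball 0 R \ {0}) :
    Aop2 a b d c w x = ∑ j, pd2 j (flux2 a b d c w j) x := by
  have hopen : IsOpen (ball (0 : ℝ²) R \ {0}) := isOpen_ball.sdiff isClosed_singleton
  refine Finset.sum_congr rfl fun j _ => (pd2_fun_sum (fun k _ => ?_) j).symm
  exact (((contDiffOn_aCoef2 ha hb hd hc j k).mul ((contDiffOn_pd2 isOpen_ball hw k).mono
    sdiff_subset)).differentiableOn one_ne_zero).differentiableAt (hopen.mem_nhds hx)

lemma sum_flux2_mul_apply {x : ℝ²} (hx : x ≠ 0) :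
    ∑ j, flux2 a b d c w j x * x j = (a ‖x‖ - d ‖x‖) * fderiv ℝ w x x := by
  have hne : ‖x‖ ^ 2 ≠ 0 := pow_ne_zero 2 (norm_ne_zero_iff.2 hx)
  have hsq : ‖x‖ ^ 2 = x 0 ^ 2 + x 1 ^ 2 := by
    simp [EuclideanSpace.norm_sq_eq, Fin.sum_univ_two]
  rw [EuclideanSpace.clm_apply_eq_sum (fderiv ℝ w x) x]
  simp only [flux2, pd2, aCoef2, Fin.sum_univ_two]
  norm_num
  rw [hsq] at hne ⊢
  field_simp
  ring

lemma sum_flux2_smul_unitRadial_mul {t : ℝ} (ht : 0 < t) (ψ : ℝ) :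
    ∑ j, flux2 a b d c w j (t • unitRadial ψ) * unitRadial ψ j
      = (a t - d t) * fderiv ℝ w (t • unitRadial ψ) (unitRadial ψ) := by
  have hx : t • unitRadial ψ ≠ 0 :=
    smul_ne_zero ht.ne' fun h => by simpa [h] using norm_unitRadial ψ
  have h := sum_flux2_mul_apply (a := a) (b := b) (d := d) (c := c) (w := w) hx
  rw [norm_smul, norm_unitRadial, mul_one, Real.norm_of_nonneg ht.le, map_smul, smul_eq_mul] at h
  simp only [PiLp.smul_apply, smul_eq_mul] at h
  refine mul_left_cancel₀ ht.ne' ?_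
  rw [Finset.mul_sum]
  convert h using 1
  · exact Finset.sum_congr rfl fun j _ => by ring
  · ring

lemma sum_fderiv_flux2_mul_unitRadial (ha : ContDiffOn ℝ 1 a (Icc 0 R))
    (hb : ContDiffOn ℝ 1 b (Icc 0 R)) (hd : ContDiffOn ℝ 1 d (Icc 0 R))
    (hc : ContDiffOn ℝ 1 c (closedBall 0 R)) (hw : ContDiffOn ℝ 2 w (ball 0 R)) {r : ℝ}
    (hr : r ∈ Ioo 0 R) (ψ : ℝ) :
    ∑ j, fderiv ℝ (flux2 a b d c w j) (r • unitRadial ψ) (unitRadial ψ) * unitRadial ψ j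
      = (deriv a r - deriv d r) * fderiv ℝ w (r • unitRadial ψ) (unitRadial ψ)
        + (a r - d r)
          * fderiv ℝ (fderiv ℝ w) (r • unitRadial ψ) (unitRadial ψ) (unitRadial ψ) := by
  have hopen : IsOpen (ball (0 : ℝ²) R \ {0}) := isOpen_ball.sdiff isClosed_singleton
  have hflux (j : Fin 2) : DifferentiableAt ℝ (flux2 a b d c w j) (r • unitRadial ψ) :=
    ((contDiffOn_flux2 ha hb hd hc hw j).differentiableOn one_ne_zero).differentiableAt
      (hopen.mem_nhds (smul_unitRadial_mem_ball_diff hr ψ))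
  have hderiv {f : ℝ → ℝ} (hf : ContDiffOn ℝ 1 f (Icc 0 R)) : HasDerivAt f (deriv f r) r :=
    ((hf.contDiffAt (Icc_mem_nhds hr.1 hr.2)).differentiableAt one_ne_zero).hasDerivAt
  have hD2w : DifferentiableAt ℝ (fderiv ℝ w) (r • unitRadial ψ) :=
    ((hw.fderiv_of_isOpen isOpen_ball (m := 1) (by norm_num)).differentiableOn
      one_ne_zero).differentiableAt
        (isOpen_ball.mem_nhds (smul_unitRadial_mem_ball_diff hr ψ).1)
  have hnormal : (fun t => ∑ j, flux2 a b d c w j (t • unitRadial ψ) * unitRadial ψ j)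
      =ᶠ[nhds r] fun t => (a t - d t) * fderiv ℝ w (t • unitRadial ψ) (unitRadial ψ) :=
    Filter.eventuallyEq_of_mem (Ioi_mem_nhds hr.1) fun t ht => sum_flux2_smul_unitRadial_mul ht ψ
  exact (hasDerivAt_sum_mul_unitRadial hflux).unique
    ((((hderiv ha).sub (hderiv hd)).mul
      (hasDerivAt_fderiv_apply_radial_comp hD2w)).congr_of_eventuallyEq hnormal)

end Coefficients

section CircularMean

variable {R r : ℝ}

lemma continuousOn_comp_polar {X : Type*} [TopologicalSpace X] {g : ℝ² → X}
    (hg : ContinuousOn g (ball 0 R)) :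
    ContinuousOn (fun p : ℝ × ℝ => g (p.1 • unitRadial p.2)) (Ioo 0 R ×ˢ univ) :=
  hg.comp (by fun_prop) fun p hp => (smul_unitRadial_mem_ball_diff hp.1 p.2).1

lemma continuous_comp_smul_unitRadial {X : Type*} [TopologicalSpace X] {g : ℝ² → X}
    (hg : ContinuousOn g (ball 0 R)) (hr : r ∈ Ioo 0 R) :
    Continuous fun ψ => g (r • unitRadial ψ) :=
  hg.comp_continuous (by fun_prop) fun ψ => (smul_unitRadial_mem_ball_diff hr ψ).1

lemma continuousOn_unitRadial_snd {S : Set (ℝ × ℝ)} :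
    ContinuousOn (fun p : ℝ × ℝ => unitRadial p.2) S :=
  (continuous_unitRadial.comp continuous_snd).continuousOn

lemma hasDerivAt_Phi2 {f : ℝ² → ℝ} (hf : ContDiffOn ℝ 1 f (ball 0 R)) (hr : r ∈ Ioo 0 R) :
    HasDerivAt (Phi2 f) (∫ ψ in 0..2 * π, fderiv ℝ f (r • unitRadial ψ) (unitRadial ψ)) r :=
  hasDerivAt_intervalIntegral_of_continuousOn
    (G' := fun t ψ => fderiv ℝ f (t • unitRadial ψ) (unitRadial ψ)) isOpen_Ioo hr
    (fun _ ht => continuous_comp_smul_unitRadial hf.continuousOn ht)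
    ((continuousOn_comp_polar (hf.continuousOn_fderiv_of_isOpen isOpen_ball le_rfl)).clm_apply
      continuousOn_unitRadial_snd)
    fun _ ht ψ => hasDerivAt_radial_comp ((hf.differentiableOn one_ne_zero).differentiableAt
      (isOpen_ball.mem_nhds (smul_unitRadial_mem_ball_diff ht ψ).1))

lemma hasDerivAt_integral_fderiv_apply_smul_unitRadial {w : ℝ² → ℝ}
    (hw : ContDiffOn ℝ 2 w (ball 0 R)) (hr : r ∈ Ioo 0 R) :
    HasDerivAt (fun t => ∫ ψ in 0..2 * π, fderiv ℝ w (t • unitRadial ψ) (unitRadial ψ))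
      (∫ ψ in 0..2 * π,
        fderiv ℝ (fderiv ℝ w) (r • unitRadial ψ) (unitRadial ψ) (unitRadial ψ)) r := by
  have hDw : ContDiffOn ℝ 1 (fderiv ℝ w) (ball 0 R) :=
    hw.fderiv_of_isOpen isOpen_ball (by norm_num)
  exact hasDerivAt_intervalIntegral_of_continuousOn
    (G' := fun t ψ => fderiv ℝ (fderiv ℝ w) (t • unitRadial ψ) (unitRadial ψ) (unitRadial ψ))
    isOpen_Ioo hr
    (fun _ ht => (continuous_comp_smul_unitRadial hDw.continuousOn ht).clm_apply
      continuous_unitRadial)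
    (((continuousOn_comp_polar (hDw.continuousOn_fderiv_of_isOpen isOpen_ball le_rfl)).clm_apply
      continuousOn_unitRadial_snd).clm_apply continuousOn_unitRadial_snd)
    fun _ ht ψ => hasDerivAt_fderiv_apply_radial_comp ((hDw.differentiableOn
      one_ne_zero).differentiableAt (isOpen_ball.mem_nhds (smul_unitRadial_mem_ball_diff ht ψ).1))

lemma Phi2_Aop2 {a b d : ℝ → ℝ} {c w : ℝ² → ℝ} (ha : ContDiffOn ℝ 1 a (Icc 0 R))
    (hb : ContDiffOn ℝ 1 b (Icc 0 R)) (hd : ContDiffOn ℝ 1 d (Icc 0 R))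
    (hc : ContDiffOn ℝ 1 c (closedBall 0 R)) (hw : ContDiffOn ℝ 2 w (ball 0 R))
    (hr : r ∈ Ioo 0 R) :
    Phi2 (Aop2 a b d c w) r
      = (deriv a r - deriv d r)
          * (∫ ψ in 0..2 * π, fderiv ℝ w (r • unitRadial ψ) (unitRadial ψ))
        + (a r - d r) * (∫ ψ in 0..2 * π,
            fderiv ℝ (fderiv ℝ w) (r • unitRadial ψ) (unitRadial ψ) (unitRadial ψ))
        + (a r - d r) / r * ∫ ψ in 0..2 * π, fderiv ℝ w (r • unitRadial ψ) (unitRadial ψ) := by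
  have hDw : ContDiffOn ℝ 1 (fderiv ℝ w) (ball 0 R) :=
    hw.fderiv_of_isOpen isOpen_ball (by norm_num)
  have hint1 : IntervalIntegrable (fun ψ => fderiv ℝ w (r • unitRadial ψ) (unitRadial ψ))
      volume 0 (2 * π) :=
    ((continuous_comp_smul_unitRadial hDw.continuousOn hr).clm_apply
      continuous_unitRadial).intervalIntegrable _ _
  have hint2 : IntervalIntegrable
      (fun ψ => fderiv ℝ (fderiv ℝ w) (r • unitRadial ψ) (unitRadial ψ) (unitRadial ψ))
      volume 0 (2 * π) :=
    (((continuous_comp_smul_unitRadial (hDw.continuousOn_fderiv_of_isOpen isOpen_ball le_rfl)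
      hr).clm_apply continuous_unitRadial).clm_apply continuous_unitRadial).intervalIntegrable _ _
  calc Phi2 (Aop2 a b d c w) r
      = ∫ ψ in 0..2 * π, ∑ j, pd2 j (flux2 a b d c w j) (r • unitRadial ψ) :=
        intervalIntegral.integral_congr fun ψ _ =>
          Aop2_eq_sum_pd2_flux2 ha hb hd hc hw (smul_unitRadial_mem_ball_diff hr ψ)
    _ = (∫ ψ in 0..2 * π,
          ∑ j, fderiv ℝ (flux2 a b d c w j) (r • unitRadial ψ) (unitRadial ψ) * unitRadial ψ j)
        + r⁻¹ * ∫ ψ in 0..2 * π, ∑ j, flux2 a b d c w j (r • unitRadial ψ) * unitRadial ψ j :=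
        integral_sum_pd2_smul_unitRadial (isOpen_ball.sdiff isClosed_singleton)
          (contDiffOn_flux2 ha hb hd hc hw) hr.1.ne' (smul_unitRadial_mem_ball_diff hr)
    _ = _ := by
      simp only [sum_fderiv_flux2_mul_unitRadial ha hb hd hc hw hr,
        sum_flux2_smul_unitRadial_mul hr.1]
      rw [intervalIntegral.integral_add (hint1.const_mul _) (hint2.const_mul _)]
      simp only [intervalIntegral.integral_const_mul]
      ring

end CircularMean

theorem stmt16_general (R : ℝ)
    (a b d : ℝ → ℝ) (c : EuclideanSpace ℝ (Fin 2) → ℝ)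
    (ha : ContDiffOn ℝ 1 a (Set.Icc 0 R)) (hb : ContDiffOn ℝ 1 b (Set.Icc 0 R))
    (hd : ContDiffOn ℝ 1 d (Set.Icc 0 R))
    (hc : ContDiffOn ℝ 1 c (Metric.closedBall 0 R))
    (w : EuclideanSpace ℝ (Fin 2) → ℝ)
    (hw : ∃ U, IsOpen U ∧ Metric.closedBall (0 : EuclideanSpace ℝ (Fin 2)) R ⊆ U ∧
        ContDiffOn ℝ 2 w U) :
    ∀ r ∈ Set.Ioo (0:ℝ) R,
      DifferentiableAt ℝ (Phi2 w) r ∧ DifferentiableAt ℝ (deriv (Phi2 w)) r ∧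
      Phi2 (Aop2 a b d c w) r
        = (a r - d r) * deriv (deriv (Phi2 w)) r
          + (derivWithin a (Set.Icc 0 R) r - derivWithin d (Set.Icc 0 R) r)
              * deriv (Phi2 w) r
          + ((a r - d r) / r) * deriv (Phi2 w) r := by
  obtain ⟨U, -, hRU, hwU⟩ := hw
  have hw : ContDiffOn ℝ 2 w (ball 0 R) := hwU.mono (ball_subset_closedBall.trans hRU)
  have hw1 : ContDiffOn ℝ 1 w (ball 0 R) := hw.of_le (by norm_num)
  intro r hr
  have hΦ' := hasDerivAt_Phi2 hw1 hr
  have hderivΦ : deriv (Phi2 w) =ᶠ[nhds r]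
      fun t => ∫ ψ in 0..2 * π, fderiv ℝ w (t • unitRadial ψ) (unitRadial ψ) :=
    Filter.eventuallyEq_of_mem (isOpen_Ioo.mem_nhds hr) fun t ht => (hasDerivAt_Phi2 hw1 ht).deriv
  have hΦ'' := hasDerivAt_integral_fderiv_apply_smul_unitRadial hw hr
  refine ⟨hΦ'.differentiableAt, hderivΦ.differentiableAt_iff.2 hΦ''.differentiableAt, ?_⟩
  have hIcc : Icc 0 R ∈ nhds r := Icc_mem_nhds hr.1 hr.2
  rw [derivWithin_of_mem_nhds hIcc, derivWithin_of_mem_nhds hIcc, hderivΦ.deriv_eq, hΦ''.deriv,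
    hΦ'.deriv, Phi2_Aop2 ha hb hd hc hw hr]
  ring

/-- in two dimensions, `Φ ∘ A = Ã₁ ∘ Φ` where
`Ã₁ = D_r(h D_r) + (h/r) D_r` and `h = a - d`: for every `r ∈ (0,R)`,
`Φ[Aw](r) = h(r)(Φw)''(r) + h'(r)(Φw)'(r) + (h(r)/r)(Φw)'(r)`. -/
theorem stmt16 (R : ℝ) (hR : 0 < R)
    (a b d : ℝ → ℝ) (c : EuclideanSpace ℝ (Fin 2) → ℝ)
    (ha : ContDiffOn ℝ 1 a (Set.Icc 0 R)) (hb : ContDiffOn ℝ 1 b (Set.Icc 0 R))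
    (hd : ContDiffOn ℝ 1 d (Set.Icc 0 R))
    (hc : ContDiffOn ℝ 1 c (Metric.closedBall 0 R))
    (w : EuclideanSpace ℝ (Fin 2) → ℝ)
    (hw : ∃ U, IsOpen U ∧ Metric.closedBall (0 : EuclideanSpace ℝ (Fin 2)) R ⊆ U ∧
        ContDiffOn ℝ 2 w U) :
    ∀ r ∈ Set.Ioo (0:ℝ) R,
      DifferentiableAt ℝ (Phi2 w) r ∧ DifferentiableAt ℝ (deriv (Phi2 w)) r ∧
      Phi2 (Aop2 a b d c w) r
        = (a r - d r) * deriv (deriv (Phi2 w)) r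
          + (derivWithin a (Set.Icc 0 R) r - derivWithin d (Set.Icc 0 R) r)
              * deriv (Phi2 w) r
          + ((a r - d r) / r) * deriv (Phi2 w) r :=
  stmt16_general R a b d c ha hb hd hc w hw
end
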